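/- arXiv:1610.06429 — 5 statements merged into one kernel-verified Lean document; each statement's English description precedes it below -/
import Mathlib

section
/- Let Γ be a group with a left-invariant δ-hyperbolic metric quasi-isometric to a word metric of a finitely generated group, so that balls of radius r contain at most K·ω^r elements for some K, ω. Let φ, ψ : Γ → ℂ be finitely supported, with φ supported in A_{R,h} and ψ in A_{R',h'}. Then for every g ∈ Γ, |φ*ψ(g)|² ≤ C · (|φ|² * |ψ|²)(g), where C depends only on h, h', the geometry of (Γ,d), and the quantity R + R' − |g|. -/
/-- Pointwise convolution estimate: if `φ`, `ψ` are finitely supported functions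
supported in the annuli `A_{R,h}`, `A_{R',h'}` of a group with a left-invariant
hyperbolic metric of at most exponential growth, then
`|φ*ψ(g)|² ≤ C(R + R' − |g|) · (|φ|² * |ψ|²)(g)`, where the constant depends only on
`h`, `h'`, the geometry, and `R + R' − |g|`. -/
theorem convolution_pointwise_estimate {Γ : Type*} [Group Γ]
    (d : Γ → Γ → ℝ) (δ : ℝ)
    (hd_symm : ∀ x y, d x y = d y x)
    (hd_tri : ∀ x y z, d x z ≤ d x y + d y z)
    (hd_inv : ∀ k x y, d (k * x) (k * y) = d x y)
    (hhyp : ∀ x y z : Γ, (d 1 x + d 1 y - d x y) / 2 ≥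
      min ((d 1 x + d 1 z - d x z) / 2) ((d 1 z + d 1 y - d z y) / 2) - δ)
    (K ω : ℝ) (hω : 1 < ω)
    (hgrowth : ∀ (x : Γ) (r : ℝ), ∃ s : Finset Γ,
      (↑s : Set Γ) = {y : Γ | d x y ≤ r} ∧ (s.card : ℝ) ≤ K * ω ^ r)
    (h h' : ℝ) :
    ∃ C : ℝ → ℝ, ∀ (R R' : ℝ) (φ ψ : Γ → ℂ),
      (Function.support φ).Finite → (Function.support ψ).Finite →
      (∀ x, φ x ≠ 0 → d 1 x ∈ Set.Icc (R - h) (R + h)) →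
      (∀ x, ψ x ≠ 0 → d 1 x ∈ Set.Icc (R' - h') (R' + h')) →
      ∀ g : Γ, ‖∑' x, φ x * ψ (x⁻¹ * g)‖ ^ 2 ≤
        C (R + R' - d 1 g) * ∑' x, ‖φ x‖ ^ 2 * ‖ψ (x⁻¹ * g)‖ ^ 2 := by
  classical
  refine ⟨fun t => K * ω ^ (t + 3 * h + h' + 2 * δ), ?_⟩
  intro R R' φ ψ hφfin hψfin hφsupp hψsupp g
  set t := R + R' - d 1 g with ht
  set ρ := t + 3 * h + h' + 2 * δ with hρ
  set S : Finset Γ := hφfin.toFinset.filter (fun x => ψ (x⁻¹ * g) ≠ 0) with hS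
  have hmemS : ∀ x, x ∈ S ↔ (φ x ≠ 0 ∧ ψ (x⁻¹ * g) ≠ 0) := by
    intro x
    simp [hS, Set.Finite.mem_toFinset, Function.mem_support]
  have hzero : ∀ x ∉ S, φ x * ψ (x⁻¹ * g) = 0 := by
    intro x hx
    by_cases hφx : φ x = 0
    · simp [hφx]
    · have : ψ (x⁻¹ * g) = 0 := by
        by_contra hψx
        exact hx ((hmemS x).mpr ⟨hφx, hψx⟩)
      simp [this]
  have hzero' : ∀ x ∉ S, ‖φ x‖ ^ 2 * ‖ψ (x⁻¹ * g)‖ ^ 2 = 0 := by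
    intro x hx
    by_cases hφx : φ x = 0
    · simp [hφx]
    · have : ψ (x⁻¹ * g) = 0 := by
        by_contra hψx
        exact hx ((hmemS x).mpr ⟨hφx, hψx⟩)
      simp [this]
  rw [tsum_eq_sum hzero, tsum_eq_sum hzero']
  -- key facts about elements of S
  have hdxg : ∀ x : Γ, d x g = d 1 (x⁻¹ * g) := by
    intro x
    have := hd_inv x⁻¹ x g
    simpa using this.symm
  have hSboundx : ∀ x ∈ S, R - h ≤ d 1 x ∧ d 1 x ≤ R + h ∧
      R' - h' ≤ d x g ∧ d x g ≤ R' + h' := by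
    intro x hx
    obtain ⟨hφx, hψx⟩ := (hmemS x).mp hx
    obtain ⟨h1, h2⟩ := hφsupp x hφx
    obtain ⟨h3, h4⟩ := hψsupp (x⁻¹ * g) hψx
    rw [hdxg x]
    exact ⟨h1, h2, h3, h4⟩
  -- all elements of S are within ρ of each other
  have hclose : ∀ x ∈ S, ∀ y ∈ S, d x y ≤ ρ := by
    intro x hx y hy
    obtain ⟨hx1, hx2, hx3, hx4⟩ := hSboundx x hx
    obtain ⟨hy1, hy2, hy3, hy4⟩ := hSboundx y hy
    have hkey := hhyp x y g
    have hgy : d g y = d y g := hd_symm g y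
    rw [hgy] at hkey
    rcases le_or_gt ((d 1 x + d 1 g - d x g) / 2) ((d 1 g + d 1 y - d y g) / 2) with hc | hc
    · rw [min_eq_left hc] at hkey
      simp only [ht, hρ] at *
      linarith
    · rw [min_eq_right hc.le] at hkey
      simp only [ht, hρ] at *
      linarith
  -- bound the cardinality of S
  have hcard : (S.card : ℝ) ≤ K * ω ^ ρ ∨ S = ∅ := by
    rcases Finset.eq_empty_or_nonempty S with hemp | ⟨x₀, hx₀⟩
    · exact Or.inr hemp
    · left
      obtain ⟨s, hscoe, hscard⟩ := hgrowth x₀ ρ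
      have hsub : S ⊆ s := by
        intro x hx
        have : x ∈ (↑s : Set Γ) := by
          rw [hscoe]
          exact hclose x₀ hx₀ x hx
        exact_mod_cast this
      calc (S.card : ℝ) ≤ (s.card : ℝ) := by exact_mod_cast Finset.card_le_card hsub
        _ ≤ K * ω ^ ρ := hscard
  rcases hcard with hcard | hemp
  · -- Cauchy–Schwarz step
    have hstep1 : ‖∑ x ∈ S, φ x * ψ (x⁻¹ * g)‖ ≤ ∑ x ∈ S, ‖φ x‖ * ‖ψ (x⁻¹ * g)‖ := by
      refine (norm_sum_le _ _).trans ?_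
      apply Finset.sum_le_sum
      intro x _
      rw [norm_mul]
    have hnn : 0 ≤ ∑ x ∈ S, ‖φ x‖ * ‖ψ (x⁻¹ * g)‖ :=
      Finset.sum_nonneg fun x _ => mul_nonneg (norm_nonneg _) (norm_nonneg _)
    have hstep2 : ‖∑ x ∈ S, φ x * ψ (x⁻¹ * g)‖ ^ 2 ≤
        (∑ x ∈ S, ‖φ x‖ * ‖ψ (x⁻¹ * g)‖) ^ 2 :=
      pow_le_pow_left₀ (norm_nonneg _) hstep1 2
    have hstep3 : (∑ x ∈ S, ‖φ x‖ * ‖ψ (x⁻¹ * g)‖) ^ 2 ≤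
        (S.card : ℝ) * ∑ x ∈ S, (‖φ x‖ * ‖ψ (x⁻¹ * g)‖) ^ 2 :=
      sq_sum_le_card_mul_sum_sq
    have heq : ∑ x ∈ S, (‖φ x‖ * ‖ψ (x⁻¹ * g)‖) ^ 2 =
        ∑ x ∈ S, ‖φ x‖ ^ 2 * ‖ψ (x⁻¹ * g)‖ ^ 2 := by
      apply Finset.sum_congr rfl
      intro x _
      ring
    have hsumnn : 0 ≤ ∑ x ∈ S, ‖φ x‖ ^ 2 * ‖ψ (x⁻¹ * g)‖ ^ 2 :=
      Finset.sum_nonneg fun x _ => mul_nonneg (sq_nonneg _) (sq_nonneg _)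
    calc ‖∑ x ∈ S, φ x * ψ (x⁻¹ * g)‖ ^ 2
        ≤ (S.card : ℝ) * ∑ x ∈ S, (‖φ x‖ * ‖ψ (x⁻¹ * g)‖) ^ 2 := hstep2.trans hstep3
      _ = (S.card : ℝ) * ∑ x ∈ S, ‖φ x‖ ^ 2 * ‖ψ (x⁻¹ * g)‖ ^ 2 := by rw [heq]
      _ ≤ (K * ω ^ ρ) * ∑ x ∈ S, ‖φ x‖ ^ 2 * ‖ψ (x⁻¹ * g)‖ ^ 2 :=
          mul_le_mul_of_nonneg_right hcard hsumnn
  · simp [hemp]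
end

section
/- Let Γ be a group with a left-invariant δ-hyperbolic roughly geodesic metric d, and let g ∈ A_{R,h}·A_{R',h'}. Set p = (R + R' − |g|)/2. Then there exist u_g, v_g ∈ Γ with u_g v_g = g, ||u_g| − (R − p)| ≤ C and ||v_g| − (R' − p)| ≤ C, and such that for every decomposition g = uv with u ∈ A_{R,h}, v ∈ A_{R',h'}, one has ||u_g^{-1} u| − p| ≤ C, where C depends only on h, h' and the geometry of (Γ,d). -/
/-- Decomposition of elements of a product of annuli: if `g ∈ A_{R,h}·A_{R',h'}` and
`p = (R + R' − |g|)/2`, then there is a decomposition `g = u_g v_g` with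
`|u_g| ≈ R − p`, `|v_g| ≈ R' − p`, and every decomposition `g = uv` with `u ∈ A_{R,h}`,
`v ∈ A_{R',h'}` satisfies `|u_g⁻¹ u| ≈ p`, with constants depending only on `h`, `h'`
and the geometry of `(Γ,d)`. -/
theorem annulus_product_decomposition {Γ : Type*} [Group Γ]
    (d : Γ → Γ → ℝ) (δ c h h' : ℝ) (hh : 0 ≤ h) (hh' : 0 ≤ h')
    (hd_symm : ∀ x y, d x y = d y x)
    (hd_tri : ∀ x y z, d x z ≤ d x y + d y z)
    (hd_inv : ∀ k x y, d (k * x) (k * y) = d x y)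
    (hhyp : ∀ x y z : Γ, (d 1 x + d 1 y - d x y) / 2 ≥
      min ((d 1 x + d 1 z - d x z) / 2) ((d 1 z + d 1 y - d z y) / 2) - δ)
    (hrough : ∀ x y : Γ, ∃ (ℓ : ℝ) (γ : ℝ → Γ), 0 ≤ ℓ ∧ γ 0 = x ∧ γ ℓ = y ∧
      ∀ s t : ℝ, s ∈ Set.Icc 0 ℓ → t ∈ Set.Icc 0 ℓ → abs (d (γ s) (γ t) - abs (s - t)) ≤ c) :
    ∃ C : ℝ, ∀ (R R' : ℝ), 0 ≤ R → 0 ≤ R' → ∀ g : Γ,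
      (∃ k k' : Γ, g = k * k' ∧ d 1 k ∈ Set.Icc (R - h) (R + h) ∧
        d 1 k' ∈ Set.Icc (R' - h') (R' + h')) →
      ∃ u v : Γ, u * v = g ∧
        |d 1 u - (R - (R + R' - d 1 g) / 2)| ≤ C ∧
        |d 1 v - (R' - (R + R' - d 1 g) / 2)| ≤ C ∧
        ∀ u' v' : Γ, u' * v' = g → d 1 u' ∈ Set.Icc (R - h) (R + h) →
          d 1 v' ∈ Set.Icc (R' - h') (R' + h') →
          |d 1 (u⁻¹ * u') - (R + R' - d 1 g) / 2| ≤ C := by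

  have hd_nonneg : ∀ x y : Γ, 0 ≤ d x y := by
    intro x y
    have t1 := hd_tri x x x
    have t2 := hd_tri x y x
    have t3 := hd_symm y x
    linarith
  have hδ0 : 0 ≤ δ := by
    have := hhyp 1 1 1
    rw [min_self] at this
    linarith
  have hc0 : 0 ≤ c := by
    obtain ⟨ℓ₀, γ₀, hl0, h0a, h0b, h0c⟩ := hrough 1 1
    have h1 := h0c 0 0 ⟨le_refl 0, hl0⟩ ⟨le_refl 0, hl0⟩
    have h2 : 0 ≤ d (γ₀ 0) (γ₀ 0) := hd_nonneg _ _
    rw [sub_self, abs_zero, sub_zero] at h1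
    calc (0:ℝ) ≤ d (γ₀ 0) (γ₀ 0) := h2
      _ ≤ |d (γ₀ 0) (γ₀ 0)| := le_abs_self _
      _ ≤ c := h1
  refine ⟨2*δ + 4*c + 4*h + 4*h', ?_⟩
  intro R R' hR hR' g hg
  obtain ⟨k, k', rfl, hk, hk'⟩ := hg
  obtain ⟨hk1, hk2⟩ := hk
  obtain ⟨hk1', hk2'⟩ := hk'
  -- bounds on |g|
  have hinv1 : d k (k * k') = d 1 k' := by
    have h := hd_inv k 1 k'
    rw [mul_one] at h
    exact h
  have hG1 : d 1 (k * k') ≤ d 1 k + d 1 k' := by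
    have := hd_tri 1 k (k * k')
    linarith [hinv1]
  have hG2 : d 1 k ≤ d 1 (k * k') + d 1 k' := by
    have h := hd_tri 1 (k * k') k
    rw [hd_symm (k * k') k, hinv1] at h
    linarith
  have hG3 : d 1 k' ≤ d 1 k + d 1 (k * k') := by
    have h := hd_tri k 1 (k * k')
    rw [hd_symm k 1, hinv1] at h
    linarith
  -- rough geodesic from 1 to g
  obtain ⟨ℓ, γ, hℓ0, hγ0, hγℓ, hγ⟩ := hrough 1 (k * k')
  have hℓ : |d 1 (k * k') - ℓ| ≤ c := by
    have h := hγ 0 ℓ ⟨le_refl 0, hℓ0⟩ ⟨hℓ0, le_refl ℓ⟩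
    rw [hγ0, hγℓ, zero_sub, abs_neg, abs_of_nonneg hℓ0] at h
    exact h
  obtain ⟨hℓa, hℓb⟩ := abs_le.mp hℓ
  set q : ℝ := (R - R' + d 1 (k * k')) / 2 with hqdef
  set t : ℝ := max 0 (min ℓ q) with htdef
  have ht0 : 0 ≤ t := le_max_left _ _
  have htℓ : t ≤ ℓ := max_le hℓ0 (min_le_left _ _)
  have htq : |t - q| ≤ (h + h') / 2 + c := by
    rw [abs_le]
    constructor
    · have h1 : min ℓ q ≤ t := le_max_right _ _
      rcases le_total ℓ q with hlq | hlq
      · rw [min_eq_left hlq] at h1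
        linarith
      · rw [min_eq_right hlq] at h1
        linarith
    · rcases le_total (min ℓ q) 0 with hm | hm
      · have h1 : t = 0 := max_eq_left hm
        rw [h1]
        linarith
      · have h1 : t = min ℓ q := max_eq_right hm
        rw [h1]
        have := min_le_right ℓ q
        linarith
  obtain ⟨htqa, htqb⟩ := abs_le.mp htq
  have hu : |d 1 (γ t) - t| ≤ c := by
    have h := hγ 0 t ⟨le_refl 0, hℓ0⟩ ⟨ht0, htℓ⟩
    rw [hγ0, zero_sub, abs_neg, abs_of_nonneg ht0] at h
    exact h
  obtain ⟨hua, hub⟩ := abs_le.mp hu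
  have hug : |d (γ t) (k * k') - (ℓ - t)| ≤ c := by
    have h := hγ t ℓ ⟨ht0, htℓ⟩ ⟨hℓ0, le_refl ℓ⟩
    rw [hγℓ, abs_of_nonpos (by linarith : t - ℓ ≤ 0), neg_sub] at h
    exact h
  obtain ⟨huga, hugb⟩ := abs_le.mp hug
  have hv : d 1 ((γ t)⁻¹ * (k * k')) = d (γ t) (k * k') := by
    have h := hd_inv (γ t) 1 ((γ t)⁻¹ * (k * k'))
    rw [mul_one, mul_inv_cancel_left] at h
    exact h.symm
  refine ⟨γ t, (γ t)⁻¹ * (k * k'), mul_inv_cancel_left _ _, ?_, ?_, ?_⟩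
  · rw [abs_le]
    constructor <;> [skip; skip] <;>
    · simp only [hqdef] at htqa htqb
      linarith
  · rw [hv, abs_le]
    constructor <;>
    · simp only [hqdef] at htqa htqb
      linarith
  · intro u' v' huv hu' hv'
    obtain ⟨hu1', hu2'⟩ := hu'
    obtain ⟨hv1', hv2'⟩ := hv'
    have hv'' : d u' (k * k') = d 1 v' := by
      have hh := hd_inv u' 1 v'
      rw [mul_one, huv] at hh
      exact hh
    have hgoal_eq : d 1 ((γ t)⁻¹ * u') = d (γ t) u' := by
      have hh := hd_inv (γ t) 1 ((γ t)⁻¹ * u')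
      rw [mul_one, mul_inv_cancel_left] at hh
      exact hh.symm
    have e1 : ∀ a : Γ, d 1 (u'⁻¹ * a) = d u' a := by
      intro a
      have hh := hd_inv u' 1 (u'⁻¹ * a)
      rw [mul_one, mul_inv_cancel_left] at hh
      exact hh.symm
    have e2 : ∀ a b : Γ, d (u'⁻¹ * a) (u'⁻¹ * b) = d a b := by
      intro a b
      have hh := hd_inv u' (u'⁻¹ * a) (u'⁻¹ * b)
      rw [mul_inv_cancel_left, mul_inv_cancel_left] at hh
      exact hh.symm
    have key := hhyp (u'⁻¹ * 1) (u'⁻¹ * (k * k')) (u'⁻¹ * γ t)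
    simp only [e1, e2] at key
    rw [hd_symm u' 1, hd_symm u' (γ t), hv''] at key
    rw [hgoal_eq, abs_le]
    have htri : d 1 u' ≤ d 1 (γ t) + d (γ t) u' := hd_tri 1 (γ t) u'
    constructor
    · simp only [hqdef] at htqa htqb
      linarith
    · rcases le_total ((d 1 u' + d (γ t) u' - d 1 (γ t)) / 2)
        ((d (γ t) u' + d 1 v' - d (γ t) (k * k')) / 2) with hab | hab
      · rw [min_eq_left hab] at key
        simp only [hqdef] at htqa htqb
        linarith
      · rw [min_eq_right hab] at key
        simp only [hqdef] at htqa htqb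
        linarith
end

section
/- Let Γ be a hyperbolic group with metric d ∈ D(Γ). Suppose φ, ψ ∈ ℂ[Γ] are supported in the annuli A_{R,h} and A_{R',h'} respectively. Then the restriction of φ*ψ to A_{R'',h''} satisfies ‖(φ*ψ)|_{A_{R'',h''}}‖₂ ≤ C ‖φ‖₂ ‖ψ‖₂, with C depending only on h, h', h'' and (Γ,d), uniformly in R, R', R''. -/
/-!
Fix `t = (R + R' - R'') / 2` and `p = (R + R'' - R') / 2`. Each `y` in the support of `ψ` is
marked by a point `a y` at distance about `t` from `1` on a rough geodesic `[1, y]`, and each `x`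
in the support of `φ` by a point `v x` at distance about `p` on `[1, x]`. When `|x y| ≈ R''`, the
triangle `(1, x, x y)` is thin, so `b = (v x)⁻¹ x (a y)` lies in a ball `B` of bounded radius.
Hence `|φ * ψ|` on the annulus is dominated by `∑ b ∈ B` of convolutions of the fibre norms
`Φ v₀ = ‖φ|_{v = v₀}‖₂` and `Ψ w₀ = ‖ψ|_{a(y)⁻¹ y = w₀}‖₂` (with `b` inserted between them), whose
supports lie in annuli of radii `p` and `q = R'' - p`. For such aligned annuli, hyperbolicity
again shows that for each `g` the contributing `v₀` form a set of bounded diameter, so the growth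
of balls and Cauchy–Schwarz bound each term, and Minkowski's inequality sums over `B`.
-/

open Finset
open scoped Pointwise

noncomputable def gromovProduct {X : Type*} (d : X → X → ℝ) (w x y : X) : ℝ :=
  (d w x + d w y - d x y) / 2

structure IsGromovHyperbolic {X : Type*} (d : X → X → ℝ) (δ : ℝ) : Prop where
  symm : ∀ x y, d x y = d y x
  triangle : ∀ x y z, d x z ≤ d x y + d y z
  min_sub_le_gromovProduct :
    ∀ w x y z, min (gromovProduct d w x z) (gromovProduct d w z y) - δ ≤ gromovProduct d w x y

def IsRoughlyGeodesic {X : Type*} (d : X → X → ℝ) (c : ℝ) : Prop :=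
  ∀ x y : X, ∃ (ℓ : ℝ) (γ : ℝ → X), 0 ≤ ℓ ∧ γ 0 = x ∧ γ ℓ = y ∧
    ∀ s t : ℝ, s ∈ Set.Icc 0 ℓ → t ∈ Set.Icc 0 ℓ → abs (d (γ s) (γ t) - |s - t|) ≤ c

def HasExponentialGrowth {X : Type*} (d : X → X → ℝ) (K ω : ℝ) : Prop :=
  ∀ (x : X) (r : ℝ), ∃ s : Finset X, (s : Set X) = {y | d x y ≤ r} ∧ (#s : ℝ) ≤ K * ω ^ r

theorem abs_projIcc_sub_le {a b t e : ℝ} (hab : a ≤ b) (he : 0 ≤ e)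
    (ht : t ∈ Set.Icc (a - e) (b + e)) : |(Set.projIcc a b hab t : ℝ) - t| ≤ e := by
  rw [Set.coe_projIcc, abs_le]
  obtain ⟨h₁, h₂⟩ := ht
  rcases max_cases a (min b t) with ⟨hmax, h₃⟩ | ⟨hmax, h₃⟩ <;>
    rcases min_cases b t with ⟨hmin, h₄⟩ | ⟨hmin, h₄⟩ <;> rw [hmax] <;> try rw [hmin]
  all_goals rw [hmin] at h₃; constructor <;> linarith

section PseudoMetric

variable {X : Type*} {d : X → X → ℝ}

namespace IsGromovHyperbolic

variable {δ : ℝ}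

theorem dist_nonneg (hd : IsGromovHyperbolic d δ) (x y : X) : 0 ≤ d x y := by
  linarith [hd.triangle x x x, hd.triangle x y x, hd.symm x y]

theorem gromovProduct_nonneg (hd : IsGromovHyperbolic d δ) (w x y : X) :
    0 ≤ gromovProduct d w x y := by
  unfold gromovProduct; linarith [hd.triangle x w y, hd.symm x w]

theorem delta_nonneg (hd : IsGromovHyperbolic d δ) (x : X) : 0 ≤ δ := by
  have := hd.min_sub_le_gromovProduct x x x x
  rw [min_self] at this; linarith

theorem dist_le_of_gromovProduct_le (hd : IsGromovHyperbolic d δ) {o g u u' : X} {e₁ e₂ : ℝ}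
    (hu : gromovProduct d u o g ≤ e₁) (hu' : gromovProduct d u' o g ≤ e₁)
    (hoo : |d o u - d o u'| ≤ e₂) : d u u' ≤ 4 * e₁ + e₂ + 2 * δ := by
  have he₁ : 0 ≤ e₁ := (hd.gromovProduct_nonneg u o g).trans hu
  have h₁ : (d u u' - e₂ - 2 * e₁) / 2 ≤ gromovProduct d u o u' := by
    unfold gromovProduct; rw [abs_le] at hoo; linarith [hd.symm u o]
  have h₂ : (d u u' - e₂ - 2 * e₁) / 2 ≤ gromovProduct d u u' g := by
    unfold gromovProduct at hu' ⊢
    rw [abs_le] at hoo; linarith [hd.triangle o u g, hd.symm u' o, hd.symm u o]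
  linarith [le_min h₁ h₂, hd.min_sub_le_gromovProduct u o g u']

theorem dist_le_of_mem_annuli (hd : IsGromovHyperbolic d δ) {o g u u' : X} {p q w w' : ℝ}
    (hg : |d o g - (p + q)| ≤ w') (hu : |d o u - p| ≤ w) (hug : |d u g - q| ≤ w)
    (hu' : |d o u' - p| ≤ w) (hu'g : |d u' g - q| ≤ w) : d u u' ≤ 6 * w + 2 * w' + 2 * δ := by
  have key : ∀ u, |d o u - p| ≤ w → |d u g - q| ≤ w → gromovProduct d u o g ≤ w + w' / 2 := by
    intro u hu hug
    unfold gromovProduct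
    rw [abs_le] at hg hu hug; linarith [hd.symm u o]
  have := hd.dist_le_of_gromovProduct_le (key u hu hug) (key u' hu' hu'g)
    (e₂ := 2 * w) (by rw [abs_le] at hu hu' ⊢; constructor <;> linarith)
  linarith

/-- `z` and `v` are the internal points of the triangle `(o, x, g)` on the sides `[x, g]` and
`[o, x]` next to `x`; thinness of the triangle makes them close. -/
theorem dist_internalPoints_le (hd : IsGromovHyperbolic d δ) {o x g z v : X} {ε : ℝ}
    (hz : |d x z - gromovProduct d x o g| ≤ ε) (hzg : d x z + d z g ≤ d x g + ε)
    (hv : |d o v - gromovProduct d o x g| ≤ ε) (hvx : d o v + d v x ≤ d o x + ε) :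
    d v z ≤ 15 * ε + 8 * δ := by
  have hδ := hd.delta_nonneg o
  have hε : 0 ≤ ε := (abs_nonneg _).trans hz
  have hgz : gromovProduct d x o g - 3 * ε / 2 ≤ gromovProduct d x g z := by
    unfold gromovProduct at hz ⊢; rw [abs_le] at hz; linarith [hd.symm g z]
  have hoz : gromovProduct d x o g - 3 * ε / 2 - δ ≤ gromovProduct d x o z := by
    have hmin : gromovProduct d x o g - 3 * ε / 2 ≤
        min (gromovProduct d x o g) (gromovProduct d x g z) := le_min (by linarith) hgz
    linarith [hd.min_sub_le_gromovProduct x o z g]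
  have hoz_upper : d o z ≤ gromovProduct d o x g + 4 * ε + 2 * δ := by
    unfold gromovProduct at *; rw [abs_le] at hz; linarith [hd.symm x o]
  have hoz_lower : gromovProduct d o x g - 2 * ε ≤ d o z := by
    unfold gromovProduct at *; rw [abs_le] at hz; linarith [hd.triangle o z g, hd.symm x o]
  have hzx : gromovProduct d z o x ≤ (5 * ε + 2 * δ) / 2 := by
    unfold gromovProduct at *; rw [abs_le] at hz; linarith [hd.symm z o, hd.symm z x, hd.symm x o]
  have hvx' : gromovProduct d v o x ≤ (5 * ε + 2 * δ) / 2 := by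
    unfold gromovProduct; linarith [hd.symm v o]
  have := hd.dist_le_of_gromovProduct_le hvx' hzx (e₂ := 5 * ε + 2 * δ)
    (by rw [abs_le] at hv ⊢; constructor <;> linarith)
  linarith

end IsGromovHyperbolic

namespace IsRoughlyGeodesic

variable {c : ℝ}

theorem nonneg (hc : IsRoughlyGeodesic d c) (x : X) : 0 ≤ c := by
  obtain ⟨ℓ, γ, hℓ, -, -, hγ⟩ := hc x x
  exact (abs_nonneg _).trans (hγ 0 0 ⟨le_rfl, hℓ⟩ ⟨le_rfl, hℓ⟩)

theorem exists_between (hc : IsRoughlyGeodesic d c) (x y : X) {t : ℝ} (ht : t ∈ Set.Icc 0 (d x y)) :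
    ∃ a, |d x a - t| ≤ 2 * c ∧ d x a + d a y ≤ d x y + 3 * c := by
  obtain ⟨ℓ, γ, hℓ, rfl, rfl, hγ⟩ := hc x y
  have h0 : (0 : ℝ) ∈ Set.Icc 0 ℓ := ⟨le_rfl, hℓ⟩
  have hτ : min t ℓ ∈ Set.Icc 0 ℓ := ⟨le_min ht.1 hℓ, min_le_right _ _⟩
  have hℓm : ℓ ∈ Set.Icc 0 ℓ := ⟨hℓ, le_rfl⟩
  have e₁ := hγ 0 ℓ h0 hℓm
  have e₂ := hγ 0 (min t ℓ) h0 hτ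
  have e₃ := hγ (min t ℓ) ℓ hτ hℓm
  rw [zero_sub, abs_neg, abs_of_nonneg hℓ] at e₁
  rw [zero_sub, abs_neg, abs_of_nonneg hτ.1] at e₂
  rw [abs_sub_comm (min t ℓ), abs_of_nonneg (sub_nonneg.2 hτ.2)] at e₃
  have hτt : |min t ℓ - t| ≤ c := by
    rw [abs_le] at e₁ ⊢
    rcases min_cases t ℓ with ⟨h, h'⟩ | ⟨h, h'⟩ <;> rw [h] <;> constructor <;> linarith [ht.2]
  rw [abs_le] at e₁ e₂ e₃ hτt
  refine ⟨γ (min t ℓ), ?_, ?_⟩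
  · rw [abs_le]; constructor <;> linarith
  · linarith

theorem exists_marking (hc : IsRoughlyGeodesic d c) {o : X} (hnn : ∀ y, 0 ≤ d o y) {e : ℝ}
    (he : 0 ≤ e) (t : ℝ) :
    ∃ a : X → X, ∀ y, t ∈ Set.Icc (-e) (d o y + e) →
      |d o (a y) - t| ≤ e + 2 * c ∧ d o (a y) + d (a y) y ≤ d o y + 3 * c := by
  choose! m hm using fun y (s : ℝ) (hs : s ∈ Set.Icc 0 (d o y)) => hc.exists_between o y hs
  refine ⟨fun y => m y (Set.projIcc 0 (d o y) (hnn y) t), fun y ht => ?_⟩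
  set τ : ℝ := (Set.projIcc 0 (d o y) (hnn y) t : ℝ)
  obtain ⟨h₁, h₂⟩ := hm y τ (Set.projIcc 0 (d o y) (hnn y) t).2
  have h₃ : |τ - t| ≤ e := abs_projIcc_sub_le (hnn y) he (by simpa using ht)
  exact ⟨by linarith [abs_sub_le (d o (m y τ)) τ t], h₂⟩

end IsRoughlyGeodesic

namespace HasExponentialGrowth

variable {K ω : ℝ}

theorem card_le (hK : HasExponentialGrowth d K ω) {x : X} {r : ℝ} {T : Finset X}
    (hT : ∀ y ∈ T, d x y ≤ r) : (#T : ℝ) ≤ K * ω ^ r := by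
  obtain ⟨s, hs, hcard⟩ := hK x r
  refine le_trans ?_ hcard
  exact_mod_cast card_le_card fun y hy => by simpa [← Finset.mem_coe, hs] using hT y hy

theorem nonneg (hK : HasExponentialGrowth d K ω) (x : X) (r : ℝ) : 0 ≤ K * ω ^ r := by
  simpa using hK.card_le (x := x) (r := r) (T := ∅) (by simp)

theorem card_le_of_forall_dist_le (hK : HasExponentialGrowth d K ω) [Nonempty X] {r : ℝ}
    {T : Finset X}     (hT : ∀ y ∈ T, ∀ y' ∈ T, d y y' ≤ r) : (#T : ℝ) ≤ K * ω ^ r := by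
  obtain rfl | ⟨y, hy⟩ := T.eq_empty_or_nonempty
  · simpa using hK.nonneg (Classical.arbitrary X) r
  · exact hK.card_le (hT y hy)

end HasExponentialGrowth

end PseudoMetric

section FiberNorm

variable {α β E : Type*} [SeminormedAddGroup E] [DecidableEq β]

noncomputable def fiberNorm (s : Finset α) (f : α → E) (p : α → β) (b : β) : ℝ :=
  √(∑ x ∈ s with p x = b, ‖f x‖ ^ 2)

theorem sum_fiberNorm_sq (s : Finset α) (f : α → E) (p : α → β) :
    ∑ b ∈ s.image p, fiberNorm s f p b ^ 2 = ∑ x ∈ s, ‖f x‖ ^ 2 := by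
  simp only [fiberNorm, Real.sq_sqrt (sum_nonneg fun _ _ => sq_nonneg _)]
  exact sum_fiberwise_of_maps_to (fun x hx => mem_image_of_mem p hx) _

theorem exists_of_fiberNorm_ne_zero {s : Finset α} {f : α → E} {p : α → β} {b : β}
    (h : fiberNorm s f p b ≠ 0) : ∃ x ∈ s, p x = b ∧ f x ≠ 0 := by
  by_contra! H
  refine h ?_
  rw [fiberNorm, sum_eq_zero fun x hx => ?_, Real.sqrt_zero]
  rw [mem_filter] at hx
  simp [H x hx.1 hx.2]

end FiberNorm

theorem sum_norm_mul_norm_le {α β E F : Type*} [SeminormedAddGroup E] [SeminormedAddGroup F]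
    [DecidableEq β] {T S₁ : Finset α} {S₂ : Finset β} {j : α → β} (f : α → E) (f' : β → F)
    (hT : T ⊆ S₁) (hj : ∀ x ∈ T, j x ∈ S₂) (hinj : Set.InjOn j T) :
    ∑ x ∈ T, ‖f x‖ * ‖f' (j x)‖ ≤ √(∑ x ∈ S₁, ‖f x‖ ^ 2) * √(∑ y ∈ S₂, ‖f' y‖ ^ 2) := by
  have h₁ : ∑ x ∈ T, ‖f x‖ ^ 2 ≤ ∑ x ∈ S₁, ‖f x‖ ^ 2 :=
    sum_le_sum_of_subset_of_nonneg hT fun _ _ _ => sq_nonneg _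
  have h₂ : ∑ x ∈ T, ‖f' (j x)‖ ^ 2 ≤ ∑ y ∈ S₂, ‖f' y‖ ^ 2 := by
    rw [← sum_image (f := fun y => ‖f' y‖ ^ 2) hinj]
    exact sum_le_sum_of_subset_of_nonneg (image_subset_iff.2 hj) fun _ _ _ => sq_nonneg _
  refine (Real.sum_mul_le_sqrt_mul_sqrt _ _ _).trans ?_
  gcongr

theorem sum_sq_sum_mul_le {ι κ : Type*} (S : Finset ι) (G : Finset κ) (α : ι → ℝ)
    (k : ι → κ → ℝ) {N M : ℝ} (hN₀ : 0 ≤ N)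
    (hN : ∀ g ∈ G, (#{v ∈ S | α v * k v g ≠ 0} : ℝ) ≤ N)
    (hM : ∀ v ∈ S, ∑ g ∈ G, k v g ^ 2 ≤ M) :
    ∑ g ∈ G, (∑ v ∈ S, α v * k v g) ^ 2 ≤ N * (∑ v ∈ S, α v ^ 2) * M := by
  calc ∑ g ∈ G, (∑ v ∈ S, α v * k v g) ^ 2
      ≤ ∑ g ∈ G, N * ∑ v ∈ S, α v ^ 2 * k v g ^ 2 := by
        gcongr with g hg
        rw [← sum_filter_ne_zero]
        have hsub : ∑ v ∈ S with α v * k v g ≠ 0, (α v * k v g) ^ 2 ≤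
            ∑ v ∈ S, α v ^ 2 * k v g ^ 2 := by
          simp only [mul_pow]
          exact sum_le_sum_of_subset_of_nonneg (filter_subset _ _) fun _ _ _ => by positivity
        refine sq_sum_le_card_mul_sum_sq.trans ?_
        exact mul_le_mul (hN g hg) hsub (sum_nonneg fun _ _ => sq_nonneg _) hN₀
    _ = N * ∑ v ∈ S, α v ^ 2 * ∑ g ∈ G, k v g ^ 2 := by
        rw [← mul_sum, sum_comm]
        simp only [mul_sum]
    _ ≤ N * ∑ v ∈ S, α v ^ 2 * M := by
        gcongr with v hv
        exact hM v hv
    _ = N * (∑ v ∈ S, α v ^ 2) * M := by rw [← sum_mul, mul_assoc]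

theorem sqrt_sum_sq_sum_le {ι κ : Type*} (B : Finset ι) (G : Finset κ) (F : ι → κ → ℝ) :
    √(∑ g ∈ G, (∑ b ∈ B, F b g) ^ 2) ≤ ∑ b ∈ B, √(∑ g ∈ G, F b g ^ 2) := by
  let u : ι → EuclideanSpace ℝ G := fun b => WithLp.toLp 2 fun g => F b g
  have hnorm : ∀ f : G → ℝ, ‖(WithLp.toLp 2 f : EuclideanSpace ℝ G)‖ = √(∑ g : G, f g ^ 2) := by
    intro f
    simp [EuclideanSpace.norm_eq]
  have := norm_sum_le B u
  simp only [u, ← WithLp.toLp_sum, hnorm] at this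
  simpa [Finset.sum_coe_sort G (fun g => F _ g ^ 2), ← Finset.sum_coe_sort G] using this

section Convolution

variable {Γ 𝕜 : Type*} [Group Γ] [DecidableEq Γ] [NonUnitalSeminormedRing 𝕜]

theorem norm_conv_le_sum_fiberNorm {φ ψ : Γ → 𝕜} {Sφ Sψ B : Finset Γ} {v a : Γ → Γ} {g : Γ}
    (hψ : ∀ y, ψ y ≠ 0 → y ∈ Sψ)
    (hB : ∀ x ∈ Sφ, ψ (x⁻¹ * g) ≠ 0 → (v x)⁻¹ * (x * a (x⁻¹ * g)) ∈ B) :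
    ‖∑ x ∈ Sφ, φ x * ψ (x⁻¹ * g)‖ ≤ ∑ b ∈ B, ∑ v₀ ∈ Sφ.image v,
      fiberNorm Sφ φ v v₀ * fiberNorm Sψ ψ (fun y => (a y)⁻¹ * y) (b⁻¹ * (v₀⁻¹ * g)) := by
  classical
  set S := Sφ.filter fun x => ψ (x⁻¹ * g) ≠ 0
  set label : Γ → Γ × Γ := fun x => (v x, (v x)⁻¹ * (x * a (x⁻¹ * g)))
  have hlabel : ∀ x ∈ S, label x ∈ Sφ.image v ×ˢ B := fun x hx => by
    rw [mem_filter] at hx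
    exact mem_product.2 ⟨mem_image_of_mem v hx.1, hB x hx.1 hx.2⟩
  calc ‖∑ x ∈ Sφ, φ x * ψ (x⁻¹ * g)‖ ≤ ∑ x ∈ S, ‖φ x‖ * ‖ψ (x⁻¹ * g)‖ := by
        rw [← sum_filter_of_ne (p := fun x => ψ (x⁻¹ * g) ≠ 0)
          fun x _ hx h => hx (by rw [h, mul_zero])]
        exact (norm_sum_le _ _).trans (sum_le_sum fun _ _ => norm_mul_le _ _)
    _ = ∑ l ∈ Sφ.image v ×ˢ B, ∑ x ∈ S with label x = l, ‖φ x‖ * ‖ψ (x⁻¹ * g)‖ :=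
        (sum_fiberwise_of_maps_to hlabel _).symm
    _ ≤ ∑ l ∈ Sφ.image v ×ˢ B, fiberNorm Sφ φ v l.1 *
          fiberNorm Sψ ψ (fun y => (a y)⁻¹ * y) (l.2⁻¹ * (l.1⁻¹ * g)) := by
        gcongr with l hl
        refine sum_norm_mul_norm_le (j := fun x => x⁻¹ * g) φ ψ ?_ ?_ ?_
        · intro x hx
          simp only [S, label, mem_filter] at hx ⊢
          exact ⟨hx.1.1, congrArg Prod.fst hx.2⟩
        · intro x hx
          simp only [S, label, mem_filter] at hx ⊢
          refine ⟨hψ _ hx.1.2, ?_⟩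
          rw [← hx.2]
          group
        · exact fun x _ y _ h => inv_injective (mul_right_cancel h)
    _ = _ := by rw [sum_product, sum_comm]

theorem sum_fiberNorm_mul_sq_le {ψ : Γ → 𝕜} {Sψ G : Finset Γ} (w : Γ → Γ) (c : Γ) :
    ∑ g ∈ G, fiberNorm Sψ ψ w (c * g) ^ 2 ≤ ∑ y ∈ Sψ, ‖ψ y‖ ^ 2 := by
  rw [← sum_fiberNorm_sq Sψ ψ w, ← sum_image (f := fun z => fiberNorm Sψ ψ w z ^ 2)
    fun _ _ _ _ h => mul_left_cancel h, ← sum_filter_ne_zero]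
  refine sum_le_sum_of_subset_of_nonneg (fun z hz => ?_) fun _ _ _ => sq_nonneg _
  obtain ⟨y, hy, rfl, -⟩ :=
    exists_of_fiberNorm_ne_zero (pow_ne_zero_iff two_ne_zero |>.1 (mem_filter.1 hz).2)
  exact mem_image_of_mem w hy

theorem sqrt_sum_norm_conv_sq_le_card_mul {φ ψ : Γ → 𝕜} {Sφ Sψ G B : Finset Γ} {v a : Γ → Γ} {N : ℝ}
    (hN₀ : 0 ≤ N) (hψ : ∀ y, ψ y ≠ 0 → y ∈ Sψ)
    (hB : ∀ g ∈ G, ∀ x ∈ Sφ, ψ (x⁻¹ * g) ≠ 0 → (v x)⁻¹ * (x * a (x⁻¹ * g)) ∈ B)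
    (hN : ∀ b ∈ B, ∀ g ∈ G, (#{v₀ ∈ Sφ.image v | fiberNorm Sφ φ v v₀ *
      fiberNorm Sψ ψ (fun y => (a y)⁻¹ * y) (b⁻¹ * (v₀⁻¹ * g)) ≠ 0} : ℝ) ≤ N) :
    √(∑ g ∈ G, ‖∑ x ∈ Sφ, φ x * ψ (x⁻¹ * g)‖ ^ 2) ≤
      #B * √N * √(∑ x ∈ Sφ, ‖φ x‖ ^ 2) * √(∑ y ∈ Sψ, ‖ψ y‖ ^ 2) := by
  set Φ := fiberNorm Sφ φ v
  set Ψ := fiberNorm Sψ ψ (fun y => (a y)⁻¹ * y)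
  calc √(∑ g ∈ G, ‖∑ x ∈ Sφ, φ x * ψ (x⁻¹ * g)‖ ^ 2)
      ≤ √(∑ g ∈ G, (∑ b ∈ B, ∑ v₀ ∈ Sφ.image v, Φ v₀ * Ψ (b⁻¹ * (v₀⁻¹ * g))) ^ 2) := by
        gcongr with g hg
        exact norm_conv_le_sum_fiberNorm hψ (hB g hg)
    _ ≤ ∑ b ∈ B, √(∑ g ∈ G, (∑ v₀ ∈ Sφ.image v, Φ v₀ * Ψ (b⁻¹ * (v₀⁻¹ * g))) ^ 2) :=
        sqrt_sum_sq_sum_le _ _ _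
    _ ≤ ∑ b ∈ B, √(N * (∑ x ∈ Sφ, ‖φ x‖ ^ 2) * ∑ y ∈ Sψ, ‖ψ y‖ ^ 2) := by
        gcongr with b hb
        rw [← sum_fiberNorm_sq Sφ φ v]
        refine sum_sq_sum_mul_le _ _ _ _ hN₀ (hN b hb) fun v₀ _ => ?_
        simpa only [mul_assoc] using sum_fiberNorm_mul_sq_le (G := G) (ψ := ψ) (Sψ := Sψ)
          (fun y => (a y)⁻¹ * y) (b⁻¹ * v₀⁻¹)
    _ = _ := by
        rw [sum_const, nsmul_eq_mul,
          Real.sqrt_mul (mul_nonneg hN₀ (sum_nonneg fun _ _ => sq_nonneg _)), Real.sqrt_mul hN₀]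
        ring

theorem tsum_ite_norm_tsum_conv_sq {φ ψ : Γ → 𝕜} {Sφ Sψ : Finset Γ} (hφ : ∀ x ∉ Sφ, φ x = 0)
    (hψ : ∀ y ∉ Sψ, ψ y = 0) (P : Γ → Prop) [DecidablePred P] :
    ∑' g, (if P g then ‖∑' x, φ x * ψ (x⁻¹ * g)‖ ^ 2 else 0) =
      ∑ g ∈ Sφ * Sψ with P g, ‖∑ x ∈ Sφ, φ x * ψ (x⁻¹ * g)‖ ^ 2 := by
  have hconv : ∀ g, ∑' x, φ x * ψ (x⁻¹ * g) = ∑ x ∈ Sφ, φ x * ψ (x⁻¹ * g) := fun g =>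
    tsum_eq_sum fun x hx => by rw [hφ x hx, zero_mul]
  have hvanish : ∀ g ∉ Sφ * Sψ, ∑ x ∈ Sφ, φ x * ψ (x⁻¹ * g) = 0 := fun g hg =>
    sum_eq_zero fun x hx => mul_eq_zero_of_right _ <| hψ _ fun hy =>
      hg (mem_mul.2 ⟨x, hx, x⁻¹ * g, hy, mul_inv_cancel_left x g⟩)
  simp only [hconv, sum_filter]
  exact tsum_eq_sum fun g hg => by simp [hvanish g hg]

end Convolution

section LeftInvariant

variable {Γ : Type*} [Group Γ] {d : Γ → Γ → ℝ}

theorem gromovProduct_mul_left (hinv : ∀ k x y, d (k * x) (k * y) = d x y) (k w x y : Γ) :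
    gromovProduct d (k * w) (k * x) (k * y) = gromovProduct d w x y := by
  simp only [gromovProduct, hinv]

theorem IsGromovHyperbolic.of_mul_left {δ : ℝ} (hsymm : ∀ x y, d x y = d y x)
    (htri : ∀ x y z, d x z ≤ d x y + d y z) (hinv : ∀ k x y, d (k * x) (k * y) = d x y)
    (hhyp : ∀ x y z : Γ,
      min (gromovProduct d 1 x z) (gromovProduct d 1 z y) - δ ≤ gromovProduct d 1 x y) :
    IsGromovHyperbolic d δ where
  symm := hsymm
  triangle := htri
  min_sub_le_gromovProduct w x y z := by
    have e : ∀ x y, gromovProduct d w x y = gromovProduct d 1 (w⁻¹ * x) (w⁻¹ * y) := fun x y => by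
      rw [← gromovProduct_mul_left hinv w 1, mul_one, mul_inv_cancel_left, mul_inv_cancel_left]
    simp only [e]
    exact hhyp _ _ _

theorem dist_self_mul (hinv : ∀ k x y, d (k * x) (k * y) = d x y) (x y : Γ) :
    d x (x * y) = d 1 y := by
  simpa using hinv x 1 y

theorem dist_eq_dist_one_inv_mul (hinv : ∀ k x y, d (k * x) (k * y) = d x y) (x y : Γ) :
    d x y = d 1 (x⁻¹ * y) := by
  simpa using (hinv x⁻¹ x y).symm

variable {δ : ℝ}

theorem IsGromovHyperbolic.dist_one_mul_triangle (hd : IsGromovHyperbolic d δ)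
    (hinv : ∀ k x y, d (k * x) (k * y) = d x y) (x y : Γ) :
    d 1 (x * y) ≤ d 1 x + d 1 y ∧ d 1 x ≤ d 1 (x * y) + d 1 y ∧ d 1 y ≤ d 1 x + d 1 (x * y) := by
  have := dist_self_mul hinv x y
  refine ⟨?_, ?_, ?_⟩ <;>
    linarith [hd.triangle 1 x (x * y), hd.triangle 1 (x * y) x, hd.triangle x 1 (x * y),
      hd.symm x (x * y), hd.symm x 1]

theorem IsGromovHyperbolic.dist_one_inv_mul_mul_le (hd : IsGromovHyperbolic d δ)
    (hinv : ∀ k x y, d (k * x) (k * y) = d x y) {x y a v : Γ} {R R' R'' h h' h'' ε : ℝ}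
    (hx : d 1 x ∈ Set.Icc (R - h) (R + h)) (hy : d 1 y ∈ Set.Icc (R' - h') (R' + h'))
    (hxy : d 1 (x * y) ∈ Set.Icc (R'' - h'') (R'' + h'')) (hσ : h + h' + h'' ≤ 2 * ε)
    (ha : |d 1 a - (R + R' - R'') / 2| ≤ ε) (hay : d 1 a + d a y ≤ d 1 y + ε)
    (hv : |d 1 v - (R + R'' - R') / 2| ≤ ε) (hvx : d 1 v + d v x ≤ d 1 x + ε) :
    d 1 (v⁻¹ * (x * a)) ≤ 30 * ε + 8 * δ := by
  have hxa := dist_self_mul hinv x a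
  have hxay : d (x * a) (x * y) = d a y := hinv x a y
  have hxxy := dist_self_mul hinv x y
  rw [Set.mem_Icc] at hx hy hxy
  rw [abs_le] at ha hv
  rw [← dist_eq_dist_one_inv_mul hinv]
  have := hd.dist_internalPoints_le (o := 1) (g := x * y) (z := x * a) (v := v) (ε := 2 * ε)
    (by rw [abs_le, hxa]; unfold gromovProduct; rw [hd.symm x 1, hxxy]; constructor <;> linarith)
    (by linarith) (by rw [abs_le]; unfold gromovProduct; rw [hxxy]; constructor <;> linarith)
    (by linarith)
  linarith

theorem IsGromovHyperbolic.card_filter_fiberNorm_mul_ne_zero_le [DecidableEq Γ] {𝕜 : Type*}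
    [NonUnitalSeminormedRing 𝕜] (hd : IsGromovHyperbolic d δ)
    (hinv : ∀ k x y, d (k * x) (k * y) = d x y) {K ω : ℝ} (hK : HasExponentialGrowth d K ω)
    {φ ψ : Γ → 𝕜} {Sφ Sψ : Finset Γ} {a v : Γ → Γ} {R R' R'' h' ε r : ℝ} {b g : Γ}
    (hSψ : ∀ y ∈ Sψ, d 1 y ∈ Set.Icc (R' - h') (R' + h')) (hh' : h' ≤ ε)
    (ha : ∀ y ∈ Sψ, |d 1 (a y) - (R + R' - R'') / 2| ≤ ε ∧ d 1 (a y) + d (a y) y ≤ d 1 y + ε)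
    (hv : ∀ x ∈ Sφ, |d 1 (v x) - (R + R'' - R') / 2| ≤ ε)
    (hb : d 1 b ≤ r) (hg : |d 1 g - R''| ≤ ε) :
    (#{v₀ ∈ Sφ.image v | fiberNorm Sφ φ v v₀ *
      fiberNorm Sψ ψ (fun y => (a y)⁻¹ * y) (b⁻¹ * (v₀⁻¹ * g)) ≠ 0} : ℝ) ≤
      K * ω ^ (6 * (3 * ε + r) + 2 * ε + 2 * δ) := by
  have hΦ : ∀ v₀, fiberNorm Sφ φ v v₀ ≠ 0 → |d 1 v₀ - (R + R'' - R') / 2| ≤ ε := by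
    intro v₀ hv₀
    obtain ⟨x, hx, rfl, -⟩ := exists_of_fiberNorm_ne_zero hv₀
    exact hv x hx
  have hΨ : ∀ w₀, fiberNorm Sψ ψ (fun y => (a y)⁻¹ * y) w₀ ≠ 0 →
      |d 1 w₀ - (R' + R'' - R) / 2| ≤ 3 * ε := by
    intro w₀ hw₀
    obtain ⟨y, hy, rfl, -⟩ := exists_of_fiberNorm_ne_zero hw₀
    obtain ⟨hay, hayy⟩ := ha y hy
    have hy := hSψ y hy
    rw [Set.mem_Icc] at hy
    rw [← dist_eq_dist_one_inv_mul hinv, abs_le] at *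
    constructor <;> linarith [hd.triangle 1 (a y) y]
  set T := {v₀ ∈ Sφ.image v | fiberNorm Sφ φ v v₀ *
      fiberNorm Sψ ψ (fun y => (a y)⁻¹ * y) (b⁻¹ * (v₀⁻¹ * g)) ≠ 0}
  have hmem : ∀ u ∈ T,
      |d 1 u - (R + R'' - R') / 2| ≤ 3 * ε + r ∧ |d u g - (R' + R'' - R) / 2| ≤ 3 * ε + r := by
    intro u hu
    obtain ⟨hΦu, hΨu⟩ := mul_ne_zero_iff.1 (mem_filter.1 hu).2
    have h₁ := hΦ u hΦu
    have h₂ := hΨ _ hΨu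
    have hε : 0 ≤ ε := (abs_nonneg _).trans h₁
    have hr : 0 ≤ r := (hd.dist_nonneg 1 b).trans hb
    have hbw := hd.dist_one_mul_triangle hinv b (b⁻¹ * (u⁻¹ * g))
    rw [mul_inv_cancel_left, ← dist_eq_dist_one_inv_mul hinv] at hbw
    simp only [abs_le] at h₁ h₂ ⊢
    refine ⟨⟨?_, ?_⟩, ?_, ?_⟩ <;> linarith
  refine hK.card_le_of_forall_dist_le fun u hu u' hu' => ?_
  exact hd.dist_le_of_mem_annuli (o := 1) (w' := ε) (by convert hg using 2; ring)
    (hmem u hu).1 (hmem u hu).2 (hmem u' hu').1 (hmem u' hu').2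

theorem IsGromovHyperbolic.sqrt_sum_norm_conv_sq_le_of_marks [DecidableEq Γ] {𝕜 : Type*}
    [NonUnitalSeminormedRing 𝕜] (hd : IsGromovHyperbolic d δ)
    (hinv : ∀ k x y, d (k * x) (k * y) = d x y) {K ω : ℝ} (hK : HasExponentialGrowth d K ω)
    {φ ψ : Γ → 𝕜} {Sφ Sψ : Finset Γ} {a v : Γ → Γ} {R R' R'' h h' h'' ε : ℝ}
    (hSφ : ∀ x ∈ Sφ, d 1 x ∈ Set.Icc (R - h) (R + h)) (hψ : ∀ y, ψ y ≠ 0 → y ∈ Sψ)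
    (hSψ : ∀ y ∈ Sψ, d 1 y ∈ Set.Icc (R' - h') (R' + h'))
    (hσ : h + h' + h'' ≤ 2 * ε) (hh' : h' ≤ ε) (hh'' : h'' ≤ ε)
    (ha : ∀ y ∈ Sψ, |d 1 (a y) - (R + R' - R'') / 2| ≤ ε ∧ d 1 (a y) + d (a y) y ≤ d 1 y + ε)
    (hv : ∀ x ∈ Sφ, |d 1 (v x) - (R + R'' - R') / 2| ≤ ε ∧ d 1 (v x) + d (v x) x ≤ d 1 x + ε) :
    √(∑ g ∈ Sφ * Sψ with d 1 g ∈ Set.Icc (R'' - h'') (R'' + h''),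
        ‖∑ x ∈ Sφ, φ x * ψ (x⁻¹ * g)‖ ^ 2) ≤
      K * ω ^ (30 * ε + 8 * δ) * √(K * ω ^ (200 * ε + 50 * δ)) *
        √(∑ x ∈ Sφ, ‖φ x‖ ^ 2) * √(∑ y ∈ Sψ, ‖ψ y‖ ^ 2) := by
  obtain ⟨B, hB, hBcard⟩ := hK 1 (30 * ε + 8 * δ)
  have hmemB : ∀ b, b ∈ B ↔ d 1 b ≤ 30 * ε + 8 * δ := fun b => by rw [← mem_coe, hB]; rfl
  refine (sqrt_sum_norm_conv_sq_le_card_mul (B := B) (v := v) (a := a)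
    (hK.nonneg 1 (200 * ε + 50 * δ)) hψ (fun g hg x hx hx' => ?_) (fun b hb g hg => ?_)).trans ?_
  · have hy := hψ _ hx'
    rw [hmemB]
    refine hd.dist_one_inv_mul_mul_le hinv (hSφ x hx) (hSψ _ hy) ?_ hσ (ha _ hy).1 (ha _ hy).2
      (hv x hx).1 (hv x hx).2
    rw [mul_inv_cancel_left]
    exact (mem_filter.1 hg).2
  · have hg' : |d 1 g - R''| ≤ ε := by
      have := (mem_filter.1 hg).2
      rw [Set.mem_Icc] at this
      rw [abs_le]; constructor <;> linarith
    convert hd.card_filter_fiberNorm_mul_ne_zero_le hinv hK hSψ hh' ha (fun x hx => (hv x hx).1)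
      ((hmemB b).1 hb) hg' using 3
    ring
  · gcongr

theorem IsGromovHyperbolic.sqrt_sum_norm_conv_sq_le [DecidableEq Γ] {𝕜 : Type*}
    [NonUnitalSeminormedRing 𝕜] (hd : IsGromovHyperbolic d δ)
    (hinv : ∀ k x y, d (k * x) (k * y) = d x y) {c : ℝ} (hc : IsRoughlyGeodesic d c) {K ω : ℝ}
    (hK : HasExponentialGrowth d K ω) {φ ψ : Γ → 𝕜} {Sφ Sψ : Finset Γ} {R R' R'' h h' h'' ε : ℝ}
    (hSφ : ∀ x ∈ Sφ, d 1 x ∈ Set.Icc (R - h) (R + h)) (hψ : ∀ y, ψ y ≠ 0 → y ∈ Sψ)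
    (hSψ : ∀ y ∈ Sψ, d 1 y ∈ Set.Icc (R' - h') (R' + h'))
    (hε : 2 * (|h| + |h'| + |h''|) + 3 * c ≤ ε) :
    √(∑ g ∈ Sφ * Sψ with d 1 g ∈ Set.Icc (R'' - h'') (R'' + h''),
        ‖∑ x ∈ Sφ, φ x * ψ (x⁻¹ * g)‖ ^ 2) ≤
      K * ω ^ (30 * ε + 8 * δ) * √(K * ω ^ (200 * ε + 50 * δ)) *
        √(∑ x ∈ Sφ, ‖φ x‖ ^ 2) * √(∑ y ∈ Sψ, ‖ψ y‖ ^ 2) := by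
  obtain hG | ⟨g₀, hg₀⟩ := (Sφ * Sψ).filter (fun g => d 1 g ∈ Set.Icc (R'' - h'') (R'' + h''))
    |>.eq_empty_or_nonempty
  · rw [hG, sum_empty, Real.sqrt_zero]
    have := hK.nonneg 1 (30 * ε + 8 * δ)
    positivity
  -- A product `x₀ y₀` in the annulus makes `(R, R', R'')` a triangle up to `h + h' + h''`, which
  -- keeps the targets of both markings within `2 (|h| + |h'| + |h''|)` of the right intervals.
  obtain ⟨hg₀, hg₀A⟩ := mem_filter.1 hg₀
  obtain ⟨x₀, hx₀, y₀, hy₀, rfl⟩ := mem_mul.1 hg₀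
  have htri := hd.dist_one_mul_triangle hinv x₀ y₀
  have hx₀A := hSφ x₀ hx₀
  have hy₀A := hSψ y₀ hy₀
  have hc₀ := hc.nonneg 1
  have hh := le_abs_self h
  have hh' := le_abs_self h'
  have hh'' := le_abs_self h''
  have hσ : 0 ≤ 2 * (|h| + |h'| + |h''|) := by positivity
  rw [Set.mem_Icc] at hx₀A hy₀A hg₀A
  obtain ⟨a, ha⟩ := hc.exists_marking (hd.dist_nonneg 1) hσ ((R + R' - R'') / 2)
  obtain ⟨v, hv⟩ := hc.exists_marking (hd.dist_nonneg 1) hσ ((R + R'' - R') / 2)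
  refine hd.sqrt_sum_norm_conv_sq_le_of_marks (a := a) (v := v) hinv hK hSφ hψ hSψ
    (by linarith) (by linarith) (by linarith) (fun y hy => ?_) (fun x hx => ?_)
  · have hyA := hSψ y hy
    rw [Set.mem_Icc] at hyA
    obtain ⟨h₁, h₂⟩ := ha y ⟨by linarith, by linarith⟩
    exact ⟨h₁.trans (by linarith), by linarith⟩
  · have hxA := hSφ x hx
    rw [Set.mem_Icc] at hxA
    obtain ⟨h₁, h₂⟩ := hv x ⟨by linarith, by linarith⟩
    exact ⟨h₁.trans (by linarith), by linarith⟩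

end LeftInvariant

theorem annular_convolution_estimate_general {Γ : Type*} [Group Γ]
    (d : Γ → Γ → ℝ) (δ c : ℝ)
    (hd_symm : ∀ x y, d x y = d y x)
    (hd_tri : ∀ x y z, d x z ≤ d x y + d y z)
    (hd_inv : ∀ k x y, d (k * x) (k * y) = d x y)
    (hhyp : ∀ x y z : Γ, (d 1 x + d 1 y - d x y) / 2 ≥
      min ((d 1 x + d 1 z - d x z) / 2) ((d 1 z + d 1 y - d z y) / 2) - δ)
    (hrough : ∀ x y : Γ, ∃ (ℓ : ℝ) (γ : ℝ → Γ), 0 ≤ ℓ ∧ γ 0 = x ∧ γ ℓ = y ∧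
      ∀ s t : ℝ, s ∈ Set.Icc 0 ℓ → t ∈ Set.Icc 0 ℓ → abs (d (γ s) (γ t) - abs (s - t)) ≤ c)
    (K ω : ℝ)
    (hgrowth : ∀ (x : Γ) (r : ℝ), ∃ s : Finset Γ,
      (↑s : Set Γ) = {y : Γ | d x y ≤ r} ∧ (s.card : ℝ) ≤ K * ω ^ r)
    (h h' h'' : ℝ) :
    ∃ C : ℝ, ∀ (R R' R'' : ℝ) (φ ψ : Γ → ℂ),
      (Function.support φ).Finite → (Function.support ψ).Finite →
      (∀ x, φ x ≠ 0 → d 1 x ∈ Set.Icc (R - h) (R + h)) →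
      (∀ x, ψ x ≠ 0 → d 1 x ∈ Set.Icc (R' - h') (R' + h')) →
      Real.sqrt (∑' g : Γ, (if d 1 g ∈ Set.Icc (R'' - h'') (R'' + h'') then
          ‖∑' x, φ x * ψ (x⁻¹ * g)‖ ^ 2 else 0)) ≤
        C * Real.sqrt (∑' g : Γ, ‖φ g‖ ^ 2) * Real.sqrt (∑' g : Γ, ‖ψ g‖ ^ 2) := by
  classical
  have hd : IsGromovHyperbolic d δ := .of_mul_left hd_symm hd_tri hd_inv hhyp
  set ε := 2 * (|h| + |h'| + |h''|) + 3 * c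
  refine ⟨K * ω ^ (30 * ε + 8 * δ) * √(K * ω ^ (200 * ε + 50 * δ)),
    fun R R' R'' φ ψ hφ hψ hφA hψA => ?_⟩
  have hφ₀ : ∀ x ∉ hφ.toFinset, φ x = 0 := by simp
  have hψ₀ : ∀ y ∉ hψ.toFinset, ψ y = 0 := by simp
  rw [tsum_ite_norm_tsum_conv_sq hφ₀ hψ₀, tsum_eq_sum fun x hx => by simp [hφ₀ x hx],
    tsum_eq_sum fun y hy => by simp [hψ₀ y hy]]
  exact hd.sqrt_sum_norm_conv_sq_le hd_inv hrough hgrowth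
    (fun x hx => hφA x (by simpa using hx)) (fun y hy => by simpa using hy)
    (fun y hy => hψA y (by simpa using hy)) le_rfl

/-- Annular convolution estimate (Lemma 2.7): if `φ`, `ψ` are finitely supported in
the annuli `A_{R,h}`, `A_{R',h'}`, then the restriction of `φ*ψ` to `A_{R'',h''}`
satisfies `‖(φ*ψ)|_{A_{R'',h''}}‖₂ ≤ C ‖φ‖₂ ‖ψ‖₂` with `C` depending only on
`h, h', h''` and the geometry, uniformly in `R, R', R''`. -/
theorem annular_convolution_estimate {Γ : Type*} [Group Γ]
    (d : Γ → Γ → ℝ) (δ c : ℝ)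
    (hd_symm : ∀ x y, d x y = d y x)
    (hd_tri : ∀ x y z, d x z ≤ d x y + d y z)
    (hd_inv : ∀ k x y, d (k * x) (k * y) = d x y)
    (hhyp : ∀ x y z : Γ, (d 1 x + d 1 y - d x y) / 2 ≥
      min ((d 1 x + d 1 z - d x z) / 2) ((d 1 z + d 1 y - d z y) / 2) - δ)
    (hrough : ∀ x y : Γ, ∃ (ℓ : ℝ) (γ : ℝ → Γ), 0 ≤ ℓ ∧ γ 0 = x ∧ γ ℓ = y ∧
      ∀ s t : ℝ, s ∈ Set.Icc 0 ℓ → t ∈ Set.Icc 0 ℓ → abs (d (γ s) (γ t) - abs (s - t)) ≤ c)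
    (K ω : ℝ) (hω : 1 < ω)
    (hgrowth : ∀ (x : Γ) (r : ℝ), ∃ s : Finset Γ,
      (↑s : Set Γ) = {y : Γ | d x y ≤ r} ∧ (s.card : ℝ) ≤ K * ω ^ r)
    (h h' h'' : ℝ) :
    ∃ C : ℝ, ∀ (R R' R'' : ℝ) (φ ψ : Γ → ℂ),
      (Function.support φ).Finite → (Function.support ψ).Finite →
      (∀ x, φ x ≠ 0 → d 1 x ∈ Set.Icc (R - h) (R + h)) →
      (∀ x, ψ x ≠ 0 → d 1 x ∈ Set.Icc (R' - h') (R' + h')) →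
      Real.sqrt (∑' g : Γ, (if d 1 g ∈ Set.Icc (R'' - h'') (R'' + h'') then
          ‖∑' x, φ x * ψ (x⁻¹ * g)‖ ^ 2 else 0)) ≤
        C * Real.sqrt (∑' g : Γ, ‖φ g‖ ^ 2) * Real.sqrt (∑' g : Γ, ‖ψ g‖ ^ 2) :=
  annular_convolution_estimate_general d δ c hd_symm hd_tri hd_inv hhyp hrough K ω hgrowth h h' h''
end

section
/- Let Γ be a non-elementary hyperbolic group with metric d ∈ D(Γ), μ_PS its Patterson-Sullivan measure, π the boundary representation on H = L²(∂Γ, μ_PS), Ξ(g) = ⟨π(g)1, 1⟩ the Harish-Chandra function, and (μ_R) probability measures supported in A_{R,h} with μ_R({g}) ≤ Cω^{-R}. Assume (a) Ξ(g) ≥ c·ω^{-|g|/2}(1+|g|) and (b) the annular RD estimate Σ_{g∈A_{R,h}} |⟨π(g)v,w⟩|² ≤ C'(1+R)²‖v‖²‖w‖². Then the forms Φ_R(v₁,v₂,w₁,w₂) = Σ_g μ_R(g) f₁(g) f₂(g^{-1}) ⟨π(g)v₁,w₁⟩·conj(⟨π(g)v₂,w₂⟩)/Ξ(g)² are uniformly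 bounded: |Φ_R| ≤ M‖f₁‖_∞‖f₂‖_∞‖v₁‖‖v₂‖‖w₁‖‖w₂‖ for a constant M independent of R. -/
/-!
On the annulus `A R` the Harish-Chandra lower bound `Ξ g ≥ c ω^{-ℓ g/2} (1 + ℓ g)` and
`μ R g ≤ Cμ ω^{-R}` give `μ R g / Ξ g² ≲ (1 + R)⁻²`. Bounding `f₁, f₂` by their sup norms,
what remains is `∑_{g ∈ A R} |⟨π g v₁, w₁⟩| |⟨π g v₂, w₂⟩|`, which by Cauchy–Schwarz and the
annular RD estimate is `≲ (1 + R)²`; the two powers of `1 + R` cancel.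
-/

open Finset

theorem rpow_neg_mul_one_add_sq_le {ω R h t : ℝ} (hω : 1 ≤ ω) (hh : 0 ≤ h) (ht : 0 ≤ t)
    (hR : 0 ≤ 1 + R) (hRt : R - h ≤ t) (htR : t ≤ R + h) :
    ω ^ (-R) * (1 + R) ^ 2 ≤ ω ^ h * (1 + h) ^ 2 * (ω ^ (-t / 2) * (1 + t)) ^ 2 := by
  have hω0 : 0 < ω := by linarith
  have hpow : ω ^ (-R) ≤ ω ^ h * ω ^ (-t) := by
    rw [← Real.rpow_add hω0]
    exact Real.rpow_le_rpow_of_exponent_le hω (by linarith)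
  have hlin : 1 + R ≤ (1 + h) * (1 + t) := by nlinarith
  have hsq : (ω ^ (-t / 2)) ^ 2 = ω ^ (-t) := by
    rw [← Real.rpow_natCast, ← Real.rpow_mul hω0.le]
    ring_nf
  calc ω ^ (-R) * (1 + R) ^ 2 ≤ ω ^ h * ω ^ (-t) * ((1 + h) * (1 + t)) ^ 2 := by gcongr
    _ = ω ^ h * (1 + h) ^ 2 * (ω ^ (-t / 2) * (1 + t)) ^ 2 := by rw [← hsq]; ring

theorem div_sq_le_of_rpow_bounds {ω R h t m Ξ c Cμ : ℝ} (hω : 1 ≤ ω) (hh : 0 ≤ h)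
    (ht : 0 ≤ t) (hR : 0 ≤ 1 + R) (hRt : R - h ≤ t) (htR : t ≤ R + h) (hc : 0 < c)
    (hΞ : c * ω ^ (-t / 2) * (1 + t) ≤ Ξ) (hCμ : 0 ≤ Cμ) (hm : m ≤ Cμ * ω ^ (-R)) :
    m / Ξ ^ 2 * (1 + R) ^ 2 ≤ Cμ * ω ^ h * (1 + h) ^ 2 / c ^ 2 := by
  have hφ : 0 < ω ^ (-t / 2) * (1 + t) := by
    have : 0 < ω ^ (-t / 2) := Real.rpow_pos_of_pos (by linarith) _
    positivity
  have hΞc : c * (ω ^ (-t / 2) * (1 + t)) ≤ Ξ := by linarith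
  have hΞ0 : 0 < Ξ := (mul_pos hc hφ).trans_le hΞc
  rw [div_mul_eq_mul_div, div_le_div_iff₀ (by positivity) (by positivity)]
  calc m * (1 + R) ^ 2 * c ^ 2 ≤ Cμ * (ω ^ (-R) * (1 + R) ^ 2) * c ^ 2 := by
        rw [← mul_assoc]; gcongr
    _ ≤ Cμ * (ω ^ h * (1 + h) ^ 2 * (ω ^ (-t / 2) * (1 + t)) ^ 2) * c ^ 2 := by
        gcongr Cμ * ?_ * _; exact rpow_neg_mul_one_add_sq_le hω hh ht hR hRt htR
    _ = Cμ * ω ^ h * (1 + h) ^ 2 * (c * (ω ^ (-t / 2) * (1 + t))) ^ 2 := by ring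
    _ ≤ Cμ * ω ^ h * (1 + h) ^ 2 * Ξ ^ 2 := by gcongr

theorem sum_mul_le_abs_mul_of_sum_sq_le {ι : Type*} {s : Finset ι} {a b : ι → ℝ} {C x y : ℝ}
    (hx : 0 ≤ x) (hy : 0 ≤ y) (ha : ∑ i ∈ s, a i ^ 2 ≤ C * x ^ 2)
    (hb : ∑ i ∈ s, b i ^ 2 ≤ C * y ^ 2) :
    ∑ i ∈ s, a i * b i ≤ |C| * (x * y) := by
  have ha0 : 0 ≤ ∑ i ∈ s, a i ^ 2 := by positivity
  have hb0 : 0 ≤ ∑ i ∈ s, b i ^ 2 := by positivity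
  refine le_of_sq_le_sq ?_ (by positivity)
  calc (∑ i ∈ s, a i * b i) ^ 2 ≤ (∑ i ∈ s, a i ^ 2) * ∑ i ∈ s, b i ^ 2 :=
        sum_mul_sq_le_sq_mul_sq s a b
    _ ≤ (C * x ^ 2) * (C * y ^ 2) := mul_le_mul ha hb hb0 (ha0.trans ha)
    _ = (|C| * (x * y)) ^ 2 := by rw [mul_pow, sq_abs]; ring

theorem norm_sum_ofReal_mul_le {ι : Type*} {s : Finset ι} {w : ι → ℝ} {x y z u : ι → ℂ}
    {W B₁ B₂ : ℝ} (hw0 : ∀ i ∈ s, 0 ≤ w i) (hw : ∀ i ∈ s, w i ≤ W)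
    (hx : ∀ i ∈ s, ‖x i‖ ≤ B₁) (hy : ∀ i ∈ s, ‖y i‖ ≤ B₂) (hB₁ : 0 ≤ B₁) :
    ‖∑ i ∈ s, (w i : ℂ) * (x i * y i * z i * starRingEnd ℂ (u i))‖ ≤
      W * B₁ * B₂ * ∑ i ∈ s, ‖z i‖ * ‖u i‖ := by
  rw [mul_sum]
  refine (norm_sum_le _ _).trans (sum_le_sum fun i hi => ?_)
  have hwi : ‖(w i : ℂ)‖ = w i := by rw [Complex.norm_real, Real.norm_of_nonneg (hw0 i hi)]
  simp only [norm_mul, hwi, RCLike.norm_conj]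
  calc w i * (‖x i‖ * ‖y i‖ * ‖z i‖ * ‖u i‖) = w i * (‖x i‖ * ‖y i‖) * (‖z i‖ * ‖u i‖) := by ring
    _ ≤ W * (B₁ * B₂) * (‖z i‖ * ‖u i‖) := by
        have := (hw0 i hi).trans (hw i hi)
        gcongr
        exacts [hw i hi, hx i hi, hy i hi]
    _ = W * B₁ * B₂ * (‖z i‖ * ‖u i‖) := by ring

theorem uniform_boundedness_forms_general {Γ : Type*} [Group Γ]
    {H : Type*} [NormedAddCommGroup H] [InnerProductSpace ℂ H]
    (ℓ : Γ → ℝ) (hℓ0 : ∀ g, 0 ≤ ℓ g)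
    (ω : ℝ) (hω : 1 < ω) (h : ℝ) (hh : 0 ≤ h)
    (A : ℝ → Finset Γ) (hA : ∀ R g, g ∈ A R ↔ ℓ g ∈ Set.Icc (R - h) (R + h))
    (π : Γ →* (H ≃ₗᵢ[ℂ] H))
    (Ξ : Γ → ℝ)
    (c : ℝ) (hc : 0 < c)
    (ha : ∀ g, c * ω ^ (-(ℓ g) / 2) * (1 + ℓ g) ≤ Ξ g)
    (C' : ℝ)
    (hb : ∀ (v w : H) (R : ℝ),
      ∑ g ∈ A R, ‖(inner ℂ (π g v) w : ℂ)‖ ^ 2 ≤ C' * (1 + R) ^ 2 * ‖v‖ ^ 2 * ‖w‖ ^ 2)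
    (μ : ℝ → Γ → ℝ) (Cμ : ℝ)
    (hμ0 : ∀ R g, 0 ≤ μ R g) (hμb : ∀ R g, μ R g ≤ Cμ * ω ^ (-R)) :
    ∃ M : ℝ, ∀ R : ℝ, 0 ≤ R → ∀ (f₁ f₂ : Γ → ℂ) (B₁ B₂ : ℝ),
      (∀ g, ‖f₁ g‖ ≤ B₁) → (∀ g, ‖f₂ g‖ ≤ B₂) →
      ∀ v₁ v₂ w₁ w₂ : H,
        ‖∑ g ∈ A R, ((μ R g / (Ξ g) ^ 2 : ℝ) : ℂ) * (f₁ g * f₂ g⁻¹ *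
            (inner ℂ (π g v₁) w₁ : ℂ) * (starRingEnd ℂ) (inner ℂ (π g v₂) w₂))‖ ≤
          M * B₁ * B₂ * ‖v₁‖ * ‖v₂‖ * ‖w₁‖ * ‖w₂‖ := by
  have hCμ : 0 ≤ Cμ := by simpa using (hμ0 0 1).trans (hμb 0 1)
  set K := Cμ * ω ^ h * (1 + h) ^ 2 / c ^ 2
  refine ⟨K * |C'|, fun R hR f₁ f₂ B₁ B₂ hf₁ hf₂ v₁ v₂ w₁ w₂ => ?_⟩
  have hR1 : 0 < 1 + R := by linarith
  have hB₁ : 0 ≤ B₁ := (norm_nonneg _).trans (hf₁ 1)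
  have hB₂ : 0 ≤ B₂ := (norm_nonneg _).trans (hf₂ 1)
  have hweight : ∀ g ∈ A R, μ R g / Ξ g ^ 2 ≤ K / (1 + R) ^ 2 := fun g hg => by
    obtain ⟨hlo, hhi⟩ := (hA R g).1 hg
    rw [le_div_iff₀ (by positivity)]
    exact div_sq_le_of_rpow_bounds hω.le hh (hℓ0 g) hR1.le hlo hhi hc (ha g) hCμ (hμb R g)
  have hCS := sum_mul_le_abs_mul_of_sum_sq_le (s := A R)
    (a := fun g => ‖(inner ℂ (π g v₁) w₁ : ℂ)‖) (b := fun g => ‖(inner ℂ (π g v₂) w₂ : ℂ)‖)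
    (x := (1 + R) * ‖v₁‖ * ‖w₁‖) (y := (1 + R) * ‖v₂‖ * ‖w₂‖) (by positivity) (by positivity)
    ((hb v₁ w₁ R).trans_eq (by ring)) ((hb v₂ w₂ R).trans_eq (by ring))
  calc _ ≤ K / (1 + R) ^ 2 * B₁ * B₂ *
        ∑ g ∈ A R, ‖(inner ℂ (π g v₁) w₁ : ℂ)‖ * ‖(inner ℂ (π g v₂) w₂ : ℂ)‖ :=
        norm_sum_ofReal_mul_le (fun g _ => by have := hμ0 R g; positivity) hweight
          (fun g _ => hf₁ g) (fun g _ => hf₂ g⁻¹) hB₁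
    _ ≤ K / (1 + R) ^ 2 * B₁ * B₂ * (|C'| * ((1 + R) * ‖v₁‖ * ‖w₁‖ * ((1 + R) * ‖v₂‖ * ‖w₂‖))) := by
        gcongr
    _ = K * |C'| * B₁ * B₂ * ‖v₁‖ * ‖v₂‖ * ‖w₁‖ * ‖w₂‖ := by field_simp

/-- Uniform boundedness of the quadrilinear forms `Φ_R` (Lemma 3.4): under the
Harish-Chandra lower bound and the annular RD estimate for matrix coefficients,
the weighted sums of products of two matrix coefficients are bounded uniformly
in `R`. -/
theorem uniform_boundedness_forms {Γ : Type*} [Group Γ]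
    {H : Type*} [NormedAddCommGroup H] [InnerProductSpace ℂ H]
    (ℓ : Γ → ℝ) (hℓ0 : ∀ g, 0 ≤ ℓ g)
    (ω : ℝ) (hω : 1 < ω) (h : ℝ) (hh : 0 ≤ h)
    (A : ℝ → Finset Γ) (hA : ∀ R g, g ∈ A R ↔ ℓ g ∈ Set.Icc (R - h) (R + h))
    (π : Γ →* (H ≃ₗᵢ[ℂ] H))
    (Ξ : Γ → ℝ) (hΞpos : ∀ g, 0 < Ξ g)
    (c : ℝ) (hc : 0 < c)
    (ha : ∀ g, c * ω ^ (-(ℓ g) / 2) * (1 + ℓ g) ≤ Ξ g)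
    (C' : ℝ)
    (hb : ∀ (v w : H) (R : ℝ),
      ∑ g ∈ A R, ‖(inner ℂ (π g v) w : ℂ)‖ ^ 2 ≤ C' * (1 + R) ^ 2 * ‖v‖ ^ 2 * ‖w‖ ^ 2)
    (μ : ℝ → Γ → ℝ) (Cμ : ℝ)
    (hμ0 : ∀ R g, 0 ≤ μ R g) (hμb : ∀ R g, μ R g ≤ Cμ * ω ^ (-R)) :
    ∃ M : ℝ, ∀ R : ℝ, 0 ≤ R → ∀ (f₁ f₂ : Γ → ℂ) (B₁ B₂ : ℝ),
      (∀ g, ‖f₁ g‖ ≤ B₁) → (∀ g, ‖f₂ g‖ ≤ B₂) →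
      ∀ v₁ v₂ w₁ w₂ : H,
        ‖∑ g ∈ A R, ((μ R g / (Ξ g) ^ 2 : ℝ) : ℂ) * (f₁ g * f₂ g⁻¹ *
            (inner ℂ (π g v₁) w₁ : ℂ) * (starRingEnd ℂ) (inner ℂ (π g v₂) w₂))‖ ≤
          M * B₁ * B₂ * ‖v₁‖ * ‖v₂‖ * ‖w₁‖ * ‖w₂‖ :=
  uniform_boundedness_forms_general ℓ hℓ0 ω hω h hh A hA π Ξ c hc ha C' hb μ Cμ hμ0 hμb
end

section
/- Let Γ be a finitely generated group with word length |·|_w and another length function |·| satisfying (1/L)|g|_w − c ≤ |g| ≤ L|g|_w + c. Let π be a unitary representation of Γ on H. Suppose (i) there exist w ≠ 0 and C with Σ_{g : |g|_w = n} |⟨π(g)v, w⟩|² ≤ C‖v‖² for all n and all v (the Good Vector Bound for w), and (ii) there exist h, c' > 0 and arbitrarily large R with Σ_{g ∈ A_{R,h}} |⟨π(g)v, w⟩|²/(1+R)² ≥ c'‖v‖²‖w‖² for some fixed v ≠ 0, where A_{R,h} = {g : |g| ∈ [R−h, R+h]}. Then one obtains a contradiction; i.e., (i) and (ii) cannot both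 hold. -/
/-!
Every `g` in the annulus `A R` has word length at most `L (R + h + c)`, so `A R` is covered by
`O(R)` word spheres. Summing the Good Vector Bound over these spheres bounds the sum over `A R`
linearly in `R`, while asymptotic orthogonality makes it grow like `(1 + R)²` along an unbounded
set of radii.
-/

open Filter Finset

theorem sum_le_mul_of_forall_sphere_sum_le {ι : Type*} (ℓw : ι → ℕ) (S : ℕ → Finset ι)
    (hS : ∀ g, g ∈ S (ℓw g)) {f : ι → ℝ} (hf : ∀ g, 0 ≤ f g) {B : ℝ}
    (hB : ∀ n, ∑ g ∈ S n, f g ≤ B) (s : Finset ι) {x : ℝ} (hx : 0 ≤ x)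
    (hs : ∀ g ∈ s, (ℓw g : ℝ) ≤ x) :
    ∑ g ∈ s, f g ≤ (x + 1) * B := by
  have hB0 : 0 ≤ B := (sum_nonneg fun g _ => hf g).trans (hB 0)
  have hmaps : ∀ g ∈ s, ℓw g ∈ range (⌊x⌋₊ + 1) := fun g hg =>
    mem_range.2 (Nat.lt_succ_of_le (Nat.le_floor (hs g hg)))
  calc ∑ g ∈ s, f g = ∑ n ∈ range (⌊x⌋₊ + 1), ∑ g ∈ s with ℓw g = n, f g :=
        (sum_fiberwise_of_maps_to hmaps f).symm
    _ ≤ ∑ n ∈ range (⌊x⌋₊ + 1), ∑ g ∈ S n, f g := by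
        refine sum_le_sum fun n _ => sum_le_sum_of_subset_of_nonneg ?_ fun g _ _ => hf g
        intro g hg
        rw [← (mem_filter.1 hg).2]
        exact hS g
    _ ≤ ∑ _n ∈ range (⌊x⌋₊ + 1), B := sum_le_sum fun n _ => hB n
    _ = (⌊x⌋₊ + 1) * B := by rw [sum_const, card_range, nsmul_eq_mul, Nat.cast_succ]
    _ ≤ (x + 1) * B := by gcongr; exact Nat.floor_le hx

theorem not_frequently_mul_sq_le_linear {K a b : ℝ} (hK : 0 < K) :
    ¬ ∃ᶠ R in atTop, K * R ^ 2 ≤ a * R + b := by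
  rw [not_frequently]
  filter_upwards [eventually_ge_atTop 1, eventually_gt_atTop ((|a| + |b|) / K)] with R h1 hR
  rw [div_lt_iff₀ hK] at hR
  nlinarith [le_abs_self a, le_abs_self b, abs_nonneg b]

theorem gvb_contradiction_general {Γ : Type*} [Group Γ]
    {H : Type*} [NormedAddCommGroup H] [InnerProductSpace ℂ H]
    (ℓw : Γ → ℕ) (ℓ : Γ → ℝ) (L c : ℝ) (hL : 1 ≤ L) (hc : 0 ≤ c)
    (hQI₁ : ∀ g, (ℓw g : ℝ) / L - c ≤ ℓ g)
    (S : ℕ → Finset Γ) (hS : ∀ n g, g ∈ S n ↔ ℓw g = n)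
    (π : Γ →* (H ≃ₗᵢ[ℂ] H))
    (w : H) (hw : w ≠ 0) (C : ℝ)
    (hGVB : ∀ (n : ℕ) (v : H), ∑ g ∈ S n, ‖(inner ℂ (π g v) w : ℂ)‖ ^ 2 ≤ C * ‖v‖ ^ 2)
    (h c' : ℝ) (hh : 0 ≤ h) (hc' : 0 < c')
    (A : ℝ → Finset Γ) (hA : ∀ R g, g ∈ A R ↔ ℓ g ∈ Set.Icc (R - h) (R + h))
    (v : H) (hv : v ≠ 0)
    (hlower : ∀ R₀ : ℝ, ∃ R ≥ R₀, c' * ‖v‖ ^ 2 * ‖w‖ ^ 2 ≤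
      (∑ g ∈ A R, ‖(inner ℂ (π g v) w : ℂ)‖ ^ 2) / (1 + R) ^ 2) :
    False := by
  set K := c' * ‖v‖ ^ 2 * ‖w‖ ^ 2
  set B := C * ‖v‖ ^ 2
  have hL0 : 0 < L := by linarith
  have hK : 0 < K := by
    have := norm_pos_iff.2 hv
    have := norm_pos_iff.2 hw
    positivity
  have hword : ∀ R g, g ∈ A R → (ℓw g : ℝ) ≤ L * (R + h + c) := fun R g hg => by
    have := hQI₁ g
    have := ((hA R g).1 hg).2
    rw [← div_le_iff₀' hL0]
    linarith
  have hupper : ∀ R, 0 ≤ R →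
      ∑ g ∈ A R, ‖(inner ℂ (π g v) w : ℂ)‖ ^ 2 ≤ (L * (R + h + c) + 1) * B := fun R hR =>
    sum_le_mul_of_forall_sphere_sum_le ℓw S (fun g => (hS _ g).2 rfl) (fun _ => by positivity)
      (fun n => hGVB n v) (A R) (by positivity) (hword R)
  refine not_frequently_mul_sq_le_linear (a := L * B) (b := (L * (h + c) + 1) * B) hK ?_
  refine ((frequently_atTop.2 hlower).and_eventually (eventually_ge_atTop 0)).mono ?_
  rintro R ⟨hlow, hR⟩
  calc K * R ^ 2 ≤ K * (1 + R) ^ 2 := by gcongr; linarith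
    _ ≤ ∑ g ∈ A R, ‖(inner ℂ (π g v) w : ℂ)‖ ^ 2 := (le_div_iff₀ (by positivity)).1 hlow
    _ ≤ (L * (R + h + c) + 1) * B := hupper R hR
    _ = L * B * R + (L * (h + c) + 1) * B := by ring

/-- Core argument of Theorem 6.2 (monotony): the Good Vector Bound (i) and the
quadratic lower bound from asymptotic orthogonality (ii) cannot both hold. -/
theorem gvb_contradiction {Γ : Type*} [Group Γ]
    {H : Type*} [NormedAddCommGroup H] [InnerProductSpace ℂ H]
    (ℓw : Γ → ℕ) (ℓ : Γ → ℝ) (L c : ℝ) (hL : 1 ≤ L) (hc : 0 ≤ c)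
    (hQI₁ : ∀ g, (ℓw g : ℝ) / L - c ≤ ℓ g)
    (hQI₂ : ∀ g, ℓ g ≤ L * (ℓw g : ℝ) + c)
    (S : ℕ → Finset Γ) (hS : ∀ n g, g ∈ S n ↔ ℓw g = n)
    (π : Γ →* (H ≃ₗᵢ[ℂ] H))
    (w : H) (hw : w ≠ 0) (C : ℝ)
    (hGVB : ∀ (n : ℕ) (v : H), ∑ g ∈ S n, ‖(inner ℂ (π g v) w : ℂ)‖ ^ 2 ≤ C * ‖v‖ ^ 2)
    (h c' : ℝ) (hh : 0 ≤ h) (hc' : 0 < c')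
    (A : ℝ → Finset Γ) (hA : ∀ R g, g ∈ A R ↔ ℓ g ∈ Set.Icc (R - h) (R + h))
    (v : H) (hv : v ≠ 0)
    (hlower : ∀ R₀ : ℝ, ∃ R ≥ R₀, c' * ‖v‖ ^ 2 * ‖w‖ ^ 2 ≤
      (∑ g ∈ A R, ‖(inner ℂ (π g v) w : ℂ)‖ ^ 2) / (1 + R) ^ 2) :
    False :=
  gvb_contradiction_general ℓw ℓ L c hL hc hQI₁ S hS π w hw C hGVB h c' hh hc' A hA v hv hlower
end
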